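/- Let λ_R, λ_I, ε ∈ ℝ with ε > 0 and λ̃ = λ_R + i·λ_I ∈ ℂ with λ̃ ∉ (-∞, -1], i.e. not (λ_I = 0 and λ_R ≤ -1). Set β = √(1 + i·ε·√(1+λ̃)) (principal square roots). Then Im(β) > 0 if and only if 1 + λ_R + √((1+λ_R)² + λ_I²) > 0, and this latter condition holds whenever λ̃ ∉ (-∞, -1]. -/

import Mathlib

open Complex Real

/-!
Both square roots are principal, and the principal root of a point `z` of the slit plane
`ℂ \ (-∞, 0]` has positive real part `√((‖z‖ + re z)/2)`. So `√(1+λ̃)` has positive real part,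
`1 + iε√(1+λ̃)` lies in the open upper half-plane, and the principal root of a point there
has positive imaginary part `√((‖z‖ - re z)/2)`. The real condition
`1 + λ_R + √((1+λ_R)² + λ_I²) > 0` is `re z + ‖z‖ > 0` for `z = 1 + λ̃`, which holds on the
slit plane; hence both sides of the equivalence are true.
-/

namespace Complex

lemma re_add_norm_pos_of_mem_slitPlane {z : ℂ} (hz : z ∈ slitPlane) : 0 < z.re + ‖z‖ := by
  rcases mem_slitPlane_iff.1 hz with hre | him
  · positivity
  · linarith [neg_le_abs z.re, abs_re_lt_norm.2 him]

lemma cpow_inv_two_re_pos_of_mem_slitPlane {z : ℂ} (hz : z ∈ slitPlane) :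
    0 < (z ^ (2⁻¹ : ℂ)).re := by
  rw [cpow_inv_two_re, Real.sqrt_pos, add_comm]
  linarith [re_add_norm_pos_of_mem_slitPlane hz]

lemma cpow_inv_two_im_pos {z : ℂ} (hz : 0 < z.im) : 0 < (z ^ (2⁻¹ : ℂ)).im := by
  rw [cpow_inv_two_im_eq_sqrt hz.le, Real.sqrt_pos]
  linarith [le_abs_self z.re, abs_re_lt_norm.2 hz.ne']

end Complex

/-- Let `λ̃ = λ_R + i·λ_I ∉ (-∞,-1]` and `ε > 0`, and set
`β = √(1 + i·ε·√(1+λ̃))` (principal square roots, realised as `z ^ (1/2)` via `cpow`).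
Then `Im β > 0` iff `1 + λ_R + √((1+λ_R)² + λ_I²) > 0`, and this latter condition holds
(whenever `λ̃ ∉ (-∞,-1]`). -/
theorem stmt_15 (lamR lamI ε : ℝ) (hε : 0 < ε)
    (hnot : ¬ (lamI = 0 ∧ lamR ≤ -1)) :
    (0 < (((1 : ℂ) + Complex.I * (ε : ℂ)
        * (((1 : ℂ) + ((lamR : ℂ) + Complex.I * (lamI : ℂ))) ^ ((1 : ℂ) / 2)))
          ^ ((1 : ℂ) / 2)).im
      ↔ 0 < 1 + lamR + Real.sqrt ((1 + lamR) ^ 2 + lamI ^ 2)) ∧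
    0 < 1 + lamR + Real.sqrt ((1 + lamR) ^ 2 + lamI ^ 2) := by
  set w : ℂ := 1 + ((lamR : ℂ) + I * (lamI : ℂ))
  have hw_re : w.re = 1 + lamR := by simp [w]
  have hw_im : w.im = lamI := by simp [w]
  have hw_norm : ‖w‖ = Real.sqrt ((1 + lamR) ^ 2 + lamI ^ 2) := by
    rw [norm_def, normSq_apply, hw_re, hw_im, ← sq, ← sq]
  have hw_slit : w ∈ slitPlane := by
    rw [mem_slitPlane_iff, hw_re, hw_im]
    by_contra! h
    exact hnot ⟨h.2, by linarith [h.1]⟩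
  have hpos : 0 < 1 + lamR + Real.sqrt ((1 + lamR) ^ 2 + lamI ^ 2) := by
    simpa [hw_re, hw_norm] using re_add_norm_pos_of_mem_slitPlane hw_slit
  refine ⟨iff_of_true ?_ hpos, hpos⟩
  rw [one_div]
  apply cpow_inv_two_im_pos
  simpa using mul_pos hε (cpow_inv_two_re_pos_of_mem_slitPlane hw_slit)
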